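/- Let L be a Heyting algebra, μ a fuzzy ideal of L, and (μᵢ)_{i∈I} a nonempty family of fuzzy ideals of L. Then for every x ∈ L, min( μ(x), (⋃ᵢμᵢ)′(x) ) = ( ⋃ᵢ (μ ⊓ μᵢ) )′(x), where μ ⊓ ν denotes the pointwise minimum, ⋃ denotes the pointwise supremum of a family, and ν′ denotes the fuzzy ideal generated by the fuzzy subset ν. In other words, the complete lattice of fuzzy ideals of L is Brouwerian: binary meet distributes over arbitrary joins. -/
import Mathlib

variable {L : Type*} [HeytingAlgebra L]

/-- `x ⊎ y := x* ⇨ y` where `x* = xᶜ = x ⇨ ⊥`. -/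
def uplus (x y : L) : L := xᶜ ⇨ y

/-- `x ⊞ y := x* ⇨ (y*)*`. -/
def boxplus (x y : L) : L := xᶜ ⇨ yᶜᶜ

/-- `x₁ ⊞ x₂ ⊞ ⋯ ⊞ xₙ` for a nonempty list `[x₁, …, xₙ]` (junk value `⊥` on `[]`). -/
def boxFold : List L → L
  | [] => ⊥
  | [a] => a
  | a :: l => boxplus a (boxFold l)

/-- `min(t₁, …, tₙ)` for a nonempty list `[t₁, …, tₙ]` of reals (junk value `1` on `[]`). -/
def minFold : List ℝ → ℝ
  | [] => 1
  | [a] => a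
  | a :: l => min a (minFold l)

/-- A fuzzy ideal of `L`: a fuzzy subset (values in `[0,1]`) that is antitone and
satisfies `μ(x ⊎ y) ≥ min(μ(x), μ(y))`. -/
def FuzzyIdeal (μ : L → ℝ) : Prop :=
  (∀ x, 0 ≤ μ x ∧ μ x ≤ 1) ∧
  (∀ x y, x ≤ y → μ y ≤ μ x) ∧
  (∀ x y, min (μ x) (μ y) ≤ μ (uplus x y))

/-- `μ′(x) = sup { min(μ(x₁), …, μ(xₙ)) : n ≥ 1, x ≤ x₁ ⊞ ⋯ ⊞ xₙ }`. -/
noncomputable def fuzzyGen (μ : L → ℝ) (x : L) : ℝ :=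
  sSup {t : ℝ | ∃ l : List L, l ≠ [] ∧ x ≤ boxFold l ∧ t = minFold (l.map μ)}

lemma boxFold_cons (a b : L) (l : List L) :
    boxFold (a :: b :: l) = boxplus a (boxFold (b :: l)) := rfl

lemma minFold_cons (a b : ℝ) (l : List ℝ) :
    minFold (a :: b :: l) = min a (minFold (b :: l)) := rfl

lemma boxplus_mono_right {a b b' : L} (h : b ≤ b') : boxplus a b ≤ boxplus a b' :=
  himp_le_himp_left (compl_le_compl (compl_le_compl h))

lemma inf_compl_inf (x a : L) : x ⊓ (x ⊓ a)ᶜ ≤ aᶜ := by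
  rw [← himp_bot a, le_himp_iff, inf_right_comm, inf_compl_self]

lemma inf_boxplus (x a b : L) : x ⊓ boxplus a b ≤ boxplus (x ⊓ a) (x ⊓ b) := by
  unfold boxplus
  rw [le_himp_iff, ← himp_bot (x ⊓ b)ᶜ, le_himp_iff]
  set s := x ⊓ (aᶜ ⇨ bᶜᶜ) ⊓ (x ⊓ a)ᶜ ⊓ (x ⊓ b)ᶜ with hs
  have hx : s ≤ x := inf_le_left.trans (inf_le_left.trans inf_le_left)
  have hp : s ≤ aᶜ ⇨ bᶜᶜ := inf_le_left.trans (inf_le_left.trans inf_le_right)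
  have hq : s ≤ (x ⊓ a)ᶜ := inf_le_left.trans inf_le_right
  have hr : s ≤ (x ⊓ b)ᶜ := inf_le_right
  have ha : s ≤ aᶜ := (le_inf hx hq).trans (inf_compl_inf x a)
  have hb : s ≤ bᶜ := (le_inf hx hr).trans (inf_compl_inf x b)
  have hbb : s ≤ bᶜᶜ := (le_inf hp ha).trans himp_inf_le
  calc s ≤ bᶜ ⊓ bᶜᶜ := le_inf hb hbb
    _ = ⊥ := inf_compl_self _

lemma inf_boxFold : ∀ l : List L, l ≠ [] → ∀ x : L,
    x ⊓ boxFold l ≤ boxFold (l.map fun y => x ⊓ y) := by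
  intro l
  induction l with
  | nil => intro h; exact absurd rfl h
  | cons a l ih =>
    intro _ x
    cases l with
    | nil => simp [boxFold]
    | cons b l' =>
      rw [List.map_cons, boxFold_cons]
      have h1 : x ⊓ boxFold (a :: b :: l') ≤ boxplus (x ⊓ a) (x ⊓ boxFold (b :: l')) := by
        rw [boxFold_cons]; exact inf_boxplus x a (boxFold (b :: l'))
      refine h1.trans (le_trans (boxplus_mono_right (ih (by simp) x)) ?_)
      cases l' with
      | nil => simp [boxFold]
      | cons c l'' => rw [List.map_cons, boxFold_cons]

lemma minFold_le_of_mem : ∀ {l : List ℝ} {a : ℝ}, a ∈ l → minFold l ≤ a := by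
  intro l
  induction l with
  | nil => intro a h; simp at h
  | cons b l ih =>
    intro a h
    cases l with
    | nil => simp at h; simp [minFold, h]
    | cons c l' =>
      rw [minFold_cons]
      rcases List.mem_cons.1 h with h | h
      · exact (min_le_left _ _).trans_eq h.symm
      · exact (min_le_right _ _).trans (ih h)

lemma le_minFold : ∀ {l : List ℝ} {b : ℝ}, l ≠ [] → (∀ a ∈ l, b ≤ a) → b ≤ minFold l := by
  intro l
  induction l with
  | nil => intro b h; exact absurd rfl h
  | cons a l ih =>
    intro b _ h
    cases l with
    | nil => exact h a (by simp)
    | cons c l' =>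
      rw [minFold_cons]
      exact le_min (h a (by simp)) (ih (by simp) fun t ht => h t (List.mem_cons_of_mem _ ht))

lemma minFold_map_le {l : List L} (hl : l ≠ []) {f g : L → ℝ} (h : ∀ y ∈ l, f y ≤ g y) :
    minFold (l.map f) ≤ minFold (l.map g) := by
  apply le_minFold (by simpa using hl)
  intro a ha
  obtain ⟨y, hy, rfl⟩ := List.mem_map.1 ha
  exact (minFold_le_of_mem (List.mem_map.2 ⟨y, hy, rfl⟩)).trans (h y hy)

lemma uplus_self (y : L) : uplus y y = yᶜᶜ := by
  unfold uplus
  apply le_antisymm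
  · rw [← himp_bot yᶜ, le_himp_iff]
    exact (le_inf himp_inf_le inf_le_right).trans (inf_compl_self y).le
  · rw [le_himp_iff]
    refine le_trans ?_ bot_le
    rw [inf_comm, inf_compl_self]

lemma fi_compl_compl {μ : L → ℝ} (hμ : FuzzyIdeal μ) (y : L) : μ y ≤ μ (yᶜᶜ) := by
  have := hμ.2.2 y y
  rwa [uplus_self, min_self] at this

lemma fi_boxplus {μ : L → ℝ} (hμ : FuzzyIdeal μ) (a b : L) :
    min (μ a) (μ b) ≤ μ (boxplus a b) := by
  have h1 : min (μ a) (μ (bᶜᶜ)) ≤ μ (uplus a (bᶜᶜ)) := hμ.2.2 a (bᶜᶜ)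
  have h2 : uplus a (bᶜᶜ) = boxplus a b := rfl
  rw [h2] at h1
  exact le_trans (min_le_min le_rfl (fi_compl_compl hμ b)) h1

lemma fi_le_boxFold {μ : L → ℝ} (hμ : FuzzyIdeal μ) :
    ∀ l : List L, l ≠ [] → minFold (l.map μ) ≤ μ (boxFold l) := by
  intro l
  induction l with
  | nil => intro h; exact absurd rfl h
  | cons a l ih =>
    intro _
    cases l with
    | nil => simp [boxFold, minFold]
    | cons b l' =>
      rw [List.map_cons, List.map_cons, boxFold_cons, minFold_cons]
      exact le_trans (min_le_min le_rfl (ih (by simp))) (fi_boxplus hμ a _)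

lemma fi_minFold_le {μ : L → ℝ} (hμ : FuzzyIdeal μ) {l : List L} (hl : l ≠ [])
    {x : L} (hx : x ≤ boxFold l) : minFold (l.map μ) ≤ μ x :=
  (fi_le_boxFold hμ l hl).trans (hμ.2.1 x (boxFold l) hx)

lemma gen_nonempty (g : L → ℝ) (x : L) :
    {t : ℝ | ∃ l : List L, l ≠ [] ∧ x ≤ boxFold l ∧ t = minFold (l.map g)}.Nonempty :=
  ⟨g ⊤, [⊤], by simp, by simp [boxFold], by simp [minFold]⟩

lemma minFold_le_one : ∀ {l : List ℝ}, (∀ a ∈ l, a ≤ 1) → minFold l ≤ 1 := by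
  intro l
  induction l with
  | nil => intro _; exact le_rfl
  | cons a l ih =>
    intro h
    cases l with
    | nil => exact h a (by simp)
    | cons c l' =>
      rw [minFold_cons]
      exact (min_le_left _ _).trans (h a (by simp))

lemma gen_bdd {g : L → ℝ} (hg : ∀ y, g y ≤ 1) (x : L) :
    BddAbove {t : ℝ | ∃ l : List L, l ≠ [] ∧ x ≤ boxFold l ∧ t = minFold (l.map g)} := by
  refine ⟨1, ?_⟩
  rintro t ⟨l, hl, hx, rfl⟩
  apply minFold_le_one
  intro a ha
  obtain ⟨y, hy, rfl⟩ := List.mem_map.1 ha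
  exact hg y

lemma le_fuzzyGen {g : L → ℝ} (hg : ∀ y, g y ≤ 1) {x : L} {l : List L}
    (hl : l ≠ []) (hx : x ≤ boxFold l) : minFold (l.map g) ≤ fuzzyGen g x :=
  le_csSup (gen_bdd hg x) ⟨l, hl, hx, rfl⟩

lemma fuzzyGen_le {g : L → ℝ} {x : L} {b : ℝ}
    (h : ∀ l : List L, l ≠ [] → x ≤ boxFold l → minFold (l.map g) ≤ b) :
    fuzzyGen g x ≤ b :=
  csSup_le (gen_nonempty g x) (by rintro t ⟨l, hl, hx, rfl⟩; exact h l hl hx)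

theorem fuzzyIdeal_lattice_brouwerian {ι : Type*} [Nonempty ι]
    (μ : L → ℝ) (hμ : FuzzyIdeal μ)
    (μi : ι → L → ℝ) (hμi : ∀ i, FuzzyIdeal (μi i)) (x : L) :
    min (μ x) (fuzzyGen (fun y => ⨆ i, μi i y) x) =
      fuzzyGen (fun y => ⨆ i, min (μ y) (μi i y)) x := by
  have hν1 : ∀ y : L, (⨆ i, μi i y) ≤ 1 := fun y => ciSup_le fun i => ((hμi i).1 y).2
  have hf1 : ∀ y : L, (⨆ i, min (μ y) (μi i y)) ≤ 1 :=
    fun y => ciSup_le fun i => (min_le_left _ _).trans ((hμ.1 y).2)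
  have bddr : ∀ y : L, BddAbove (Set.range fun i => min (μ y) (μi i y)) :=
    fun y => ⟨1, by rintro t ⟨i, rfl⟩; exact (min_le_left _ _).trans ((hμ.1 y).2)⟩
  have bddν : ∀ y : L, BddAbove (Set.range fun i => μi i y) :=
    fun y => ⟨1, by rintro t ⟨i, rfl⟩; exact ((hμi i).1 y).2⟩
  apply le_antisymm
  · by_contra h
    push_neg at h
    set B := fuzzyGen (fun y => ⨆ i, min (μ y) (μi i y)) x with hB
    have hBμ : B < μ x := h.trans_le (min_le_left _ _)
    have hBν : B < fuzzyGen (fun y => ⨆ i, μi i y) x := h.trans_le (min_le_right _ _)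
    obtain ⟨t, ⟨l, hl, hx, rfl⟩, hBt⟩ := exists_lt_of_lt_csSup (gen_nonempty _ x) hBν
    have key : min (μ x) (minFold (l.map fun y => ⨆ i, μi i y)) ≤ B := by
      have hl' : (l.map fun y => x ⊓ y) ≠ [] := by simpa using hl
      have hx' : x ≤ boxFold (l.map fun y => x ⊓ y) :=
        le_trans (le_inf le_rfl hx) (inf_boxFold l hl x)
      refine le_trans ?_ (le_fuzzyGen hf1 hl' hx')
      rw [List.map_map]
      apply le_minFold (by simpa using hl)
      intro a ha
      obtain ⟨y, hy, rfl⟩ := List.mem_map.1 ha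
      apply le_of_forall_lt
      intro c hc
      rw [lt_min_iff] at hc
      have hcy : c < ⨆ i, μi i y :=
        hc.2.trans_le (minFold_le_of_mem (List.mem_map.2 ⟨y, hy, rfl⟩))
      obtain ⟨i, hi⟩ := exists_lt_of_lt_ciSup hcy
      have hlt : c < min (μ (x ⊓ y)) (μi i (x ⊓ y)) :=
        lt_min (hc.1.trans_le (hμ.2.1 (x ⊓ y) x inf_le_left))
          (hi.trans_le ((hμi i).2.1 (x ⊓ y) y inf_le_right))
      exact hlt.trans_le (le_ciSup (bddr (x ⊓ y)) i)
    exact absurd key (not_le.2 (lt_min hBμ hBt))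
  · apply fuzzyGen_le
    intro l hl hx
    apply le_min
    · refine le_trans (minFold_map_le hl ?_) (fi_minFold_le hμ hl hx)
      exact fun y _ => ciSup_le fun i => min_le_left _ _
    · refine le_trans (minFold_map_le hl ?_) (le_fuzzyGen hν1 hl hx)
      exact fun y _ => ciSup_le fun i => (min_le_right _ _).trans (le_ciSup (bddν y) i)
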